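/- For any invertible diagonal matrix S ∈ ℝ^{TL×TL}, any subspace V ⊆ ℝ^{TL}, and any N ≥ 0, the block N-sparsity satisfies: (a) sp^{(T)}_N(c_S V) ≥ sp^{(T)}_N(V); and (b) sp^{(T)}_{N + Δ_S V}(e_S V) ≥ sp^{(T)}_N(V). -/
import Mathlib


open Matrix Submodule Module

/-- `sp^{(T)}(V) = ∑_{k=1}^L dim(P_k V)`. -/
noncomputable def spT (T L : ℕ) (V : Submodule ℝ (Fin T × Fin L → ℝ)) : ℕ :=
  ∑ k : Fin L, finrank ℝ ↥(V.map (LinearMap.funLeft ℝ ℝ (fun s : Fin T => (s, k))))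

/-- The block `N`-sparsity `sp^{(T)}_N(V) = min{sp^{(T)}(W) : W ≤ V, dim W ≥ N}`
(in `ℕ∞`, so that it is `∞` when no such `W` exists). -/
noncomputable def spTN (T L : ℕ) (N : ℕ) (V : Submodule ℝ (Fin T × Fin L → ℝ)) : ℕ∞ :=
  ⨅ (W : Submodule ℝ (Fin T × Fin L → ℝ)) (_ : W ≤ V) (_ : N ≤ finrank ℝ ↥W),
    (spT T L W : ℕ∞)

/-- The extension of a subspace `V` under a matrix `A`: `e_A V = V + A V`. -/
noncomputable def extT {n : Type*} [Fintype n] [DecidableEq n] (A : Matrix n n ℝ)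
    (V : Submodule ℝ (n → ℝ)) : Submodule ℝ (n → ℝ) :=
  V ⊔ V.map (Matrix.toLin' A)

/-- The contraction of a subspace `V` under a matrix `A`: `c_A V = V ∩ A V`. -/
noncomputable def conT {n : Type*} [Fintype n] [DecidableEq n] (A : Matrix n n ℝ)
    (V : Submodule ℝ (n → ℝ)) : Submodule ℝ (n → ℝ) :=
  V ⊓ V.map (Matrix.toLin' A)

/-- The alignment width `Δ_A V = dim(e_A V) − dim V`. -/
noncomputable def widthT {n : Type*} [Fintype n] [DecidableEq n] (A : Matrix n n ℝ)
    (V : Submodule ℝ (n → ℝ)) : ℕ :=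
  finrank ℝ ↥(extT A V) - finrank ℝ ↥V

/-- For an invertible diagonal matrix `S` on `ℝ^{TL}` and subspace `V`:
(a) `sp^{(T)}_N(c_S V) ≥ sp^{(T)}_N(V)`; (b) `sp^{(T)}_{N+Δ_S V}(e_S V) ≥ sp^{(T)}_N(V)`. -/
theorem stmt14 (T L : ℕ) (d : Fin T × Fin L → ℝ) (hd : ∀ p, d p ≠ 0)
    (V : Submodule ℝ (Fin T × Fin L → ℝ)) (N : ℕ) :
    spTN T L N V ≤ spTN T L N (conT (Matrix.diagonal d) V) ∧
    spTN T L N V ≤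
      spTN T L (N + widthT (Matrix.diagonal d) V) (extT (Matrix.diagonal d) V) := by
  have hmono : ∀ W W' : Submodule ℝ (Fin T × Fin L → ℝ), W ≤ W' →
      spT T L W ≤ spT T L W' := by
    intro W W' h
    refine Finset.sum_le_sum fun k _ => ?_
    exact Submodule.finrank_mono (Submodule.map_mono h)
  constructor
  · refine le_iInf fun W => le_iInf fun hW => le_iInf fun hN => ?_
    refine iInf_le_of_le W (iInf_le_of_le (hW.trans inf_le_left) (iInf_le_of_le hN le_rfl))
  · refine le_iInf fun W => le_iInf fun hW => le_iInf fun hN => ?_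
    refine iInf_le_of_le (W ⊓ V) (iInf_le_of_le inf_le_right (iInf_le_of_le ?_ ?_))
    · have hsup : W ⊔ V ≤ extT (Matrix.diagonal d) V :=
        sup_le hW (le_sup_left : V ≤ _)
      have h1 : finrank ℝ ↥(W ⊔ V) ≤ finrank ℝ ↥(extT (Matrix.diagonal d) V) :=
        Submodule.finrank_mono hsup
      have h2 := Submodule.finrank_sup_add_finrank_inf_eq W V
      have h3 : finrank ℝ ↥V ≤ finrank ℝ ↥(extT (Matrix.diagonal d) V) :=
        Submodule.finrank_mono (le_sup_left : V ≤ _)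
      unfold widthT at hN
      omega
    · exact_mod_cast hmono _ _ inf_le_left
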